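/- Let f ∈ ℤ[x] be a polynomial of degree d ≥ 2 with leading coefficient f_d, without rational integer roots. Set D = d|f_d| + 1. Then there exists N_0 such that for all N ≥ N_0, every prime p > DN and every k with 1 ≤ k ≤ d−1, at most d−k of the values f(1), f(2), ..., f(N) are divisible by p^k. -/

import Mathlib

/-!
Suppose `p ^ k` divides `f n` at `m + 1 = d - k + 1` integers `1 ≤ n ≤ N`. The divided difference
`A` of `f` at these nodes equals `∑ n, f_n h_{n-m}`, where `h_j` is the complete homogeneous
polynomial of degree `j` in the nodes, so `A` is an integer. Writing
`A = ∑ i, f(x_i) / ∏_{j ≠ i} (x_i - x_j)`, whose denominators are prime to `p` because `N < p`,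
gives `p ^ k ∣ A`. The term `f_d h_k` dominates the others, so `|A| ≤ (D N) ^ k < p ^ k` and
hence `A = 0`; by the same domination this forces every node below `B d ^ (k - 1)`, where
`B = ∑ |f_n|`. But a node `n` with `p ^ k ∣ f n ≠ 0` has `p ≤ |f n| ≤ B n ^ d`, which is
impossible for such small `n` once `N` is large.
-/

open Polynomial Finset

namespace Finset

variable {ι R : Type*} [DecidableEq ι]

def completeHomogeneous [CommSemiring R] (s : Finset ι) (x : ι → R) (j : ℕ) : R :=
  ∑ α ∈ s.piAntidiag j, ∏ i ∈ s, x i ^ α i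

lemma map_completeHomogeneous {S : Type*} [CommSemiring R] [CommSemiring S] (φ : R →+* S)
    (s : Finset ι) (x : ι → R) (j : ℕ) :
    φ (s.completeHomogeneous x j) = s.completeHomogeneous (φ ∘ x) j := by
  simp [completeHomogeneous, map_sum, map_prod]

section Order

variable [CommSemiring R] [PartialOrder R] [IsOrderedRing R] {s : Finset ι} {x : ι → R}

lemma completeHomogeneous_nonneg (hx : ∀ i ∈ s, 0 ≤ x i) (j : ℕ) :
    0 ≤ s.completeHomogeneous x j :=
  sum_nonneg fun _ _ => prod_nonneg fun i hi => pow_nonneg (hx i hi) _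

lemma pow_le_completeHomogeneous (hx : ∀ i ∈ s, 0 ≤ x i) {i : ι} (hi : i ∈ s) (j : ℕ) :
    x i ^ j ≤ s.completeHomogeneous x j := by
  have hmem : Pi.single i j ∈ s.piAntidiag j := by
    rw [mem_piAntidiag]
    refine ⟨by simp [hi], fun a ha => ?_⟩
    by_contra hai
    exact ha (Pi.single_eq_of_ne (by rintro rfl; exact hai hi) _)
  calc x i ^ j = ∏ a ∈ s, x a ^ (Pi.single i j : ι → ℕ) a := by
        rw [prod_eq_single_of_mem i hi fun a _ hai => by simp [Pi.single_eq_of_ne hai]]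
        simp
    _ ≤ _ := single_le_sum (f := fun α : ι → ℕ => ∏ a ∈ s, x a ^ α a)
        (fun _ _ => prod_nonneg fun a ha => pow_nonneg (hx a ha) _) hmem

lemma completeHomogeneous_le_sum_pow (hx : ∀ i ∈ s, 0 ≤ x i) (j : ℕ) :
    s.completeHomogeneous x j ≤ (∑ i ∈ s, x i) ^ j := by
  rw [sum_pow_eq_sum_piAntidiag]
  refine sum_le_sum fun α _ => le_mul_of_one_le_left
    (prod_nonneg fun i hi => pow_nonneg (hx i hi) _) ?_
  exact Nat.cast_one (R := R) ▸ Nat.mono_cast (Nat.multinomial_pos s α)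

lemma completeHomogeneous_le_card_mul_pow {M : R} (hx : ∀ i ∈ s, x i ∈ Set.Icc 0 M) (j : ℕ) :
    s.completeHomogeneous x j ≤ (#s * M) ^ j := by
  refine (completeHomogeneous_le_sum_pow (fun i hi => (hx i hi).1) j).trans
    (pow_le_pow_left₀ (sum_nonneg fun i hi => (hx i hi).1) ?_ j)
  simpa using sum_le_card_nsmul s x M fun i hi => (hx i hi).2

end Order

end Finset

namespace PowerSeries

variable {ι R : Type*}

lemma one_sub_C_mul_X_mul_mk_pow [CommRing R] (a : R) :
    (1 - C a * X) * mk (a ^ ·) = 1 := by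
  have h := congrArg (rescale a) (mk_one_mul_one_sub_eq_one (S := R))
  rw [map_mul, map_sub, map_one, rescale_X, rescale_mk] at h
  simpa [mul_comm] using h

lemma coeff_prod_mk_pow [DecidableEq ι] [CommSemiring R] (s : Finset ι) (x : ι → R) (j : ℕ) :
    coeff j (∏ i ∈ s, mk fun n => x i ^ n) = s.completeHomogeneous x j := by
  rw [coeff_prod, completeHomogeneous, finsuppAntidiag, sum_map, ← sum_attach (s.piAntidiag j)]
  simp [coeff_mk]

end PowerSeries

lemma Polynomial.natDegree_prod_one_sub_C_mul_X_le {ι R : Type*} [CommRing R] (s : Finset ι)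
    (v : ι → R) : (∏ j ∈ s, (1 - C (v j) * X)).natDegree ≤ #s := by
  refine (natDegree_prod_le _ _).trans ?_
  rw [card_eq_sum_ones]
  exact sum_le_sum fun j _ => by compute_degree!

namespace Lagrange

variable {ι K : Type*} [DecidableEq ι] [Field K] {s : Finset ι} {v : ι → K} {m : ℕ}

/-- Both sides have degree at most `m` and agree at the `m + 1` points `(v i)⁻¹`. -/
lemma sum_C_nodalWeight_mul_prod_one_sub_C_mul_X (hvs : Set.InjOn v s) (hv : ∀ i ∈ s, v i ≠ 0)
    (hs : #s = m + 1) :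
    ∑ i ∈ s, C (nodalWeight s v i) * ∏ j ∈ s.erase i, (1 - C (v j) * X) = (X ^ m : K[X]) := by
  have hdeg : ∀ i ∈ s,
      (C (nodalWeight s v i) * ∏ j ∈ s.erase i, (1 - C (v j) * X)).natDegree ≤ m :=
    fun i hi => (natDegree_C_mul_le _ _).trans
      ((natDegree_prod_one_sub_C_mul_X_le _ _).trans (by rw [card_erase_of_mem hi, hs]; rfl))
  refine eq_of_degrees_lt_of_eval_index_eq (v := fun i => (v i)⁻¹) s
    (fun i hi j hj hij => hvs hi hj (inv_injective hij)) ?_ ?_ fun i hi => ?_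
  · rw [hs]
    exact (degree_le_of_natDegree_le (natDegree_sum_le_of_forall_le _ _ hdeg)).trans_lt
      (by exact_mod_cast Nat.lt_succ_self m)
  · rw [hs, degree_X_pow]
    exact_mod_cast Nat.lt_succ_self m
  · rw [eval_finsetSum, sum_eq_single_of_mem i hi fun j hj hji => ?_]
    · simp only [eval_mul, eval_C, eval_prod, eval_sub, eval_one, eval_X, eval_pow, nodalWeight]
      have hm : m = #(s.erase i) := by rw [card_erase_of_mem hi, hs, Nat.add_sub_cancel]
      rw [← prod_mul_distrib, hm, ← prod_const]
      refine prod_congr rfl fun j hj => ?_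
      have hij : v i - v j ≠ 0 :=
        sub_ne_zero.2 fun h => (mem_erase.1 hj).1 (hvs (mem_of_mem_erase hj) hi h.symm)
      field_simp [hv i hi]
    · simp only [eval_mul, eval_prod]
      refine mul_eq_zero_of_right _ (prod_eq_zero (mem_erase.2 ⟨fun h => hji h.symm, hi⟩) ?_)
      simp [hv i hi]

theorem sum_nodalWeight_mul_pow (hvs : Set.InjOn v s) (hv : ∀ i ∈ s, v i ≠ 0) (hs : #s = m + 1)
    (n : ℕ) :
    ∑ i ∈ s, nodalWeight s v i * v i ^ n =
      if m ≤ n then s.completeHomogeneous v (n - m) else 0 := by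
  -- `G i = 1 / (1 - v i X)`, and `∏ i, G i` is the generating function of the `h_j(v)`.
  set G : ι → PowerSeries K := fun i => PowerSeries.mk (v i ^ ·)
  have hpoly := congrArg (coeToPowerSeries.ringHom (R := K))
    (sum_C_nodalWeight_mul_prod_one_sub_C_mul_X hvs hv hs)
  simp only [map_sum, map_mul, map_prod, map_sub, map_one, map_pow, coeToPowerSeries.ringHom_apply,
    coe_C, coe_X] at hpoly
  have hgen : ∑ i ∈ s, PowerSeries.C (nodalWeight s v i) * G i
      = PowerSeries.X ^ m * ∏ i ∈ s, G i := by
    rw [← hpoly, sum_mul]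
    refine sum_congr rfl fun i hi => ?_
    rw [← mul_prod_erase s G hi, mul_assoc, mul_left_comm _ (G i), ← prod_mul_distrib,
      prod_eq_one fun j _ => PowerSeries.one_sub_C_mul_X_mul_mk_pow (v j), mul_one]
  have := congrArg (PowerSeries.coeff n) hgen
  rw [map_sum, PowerSeries.coeff_X_pow_mul', PowerSeries.coeff_prod_mk_pow] at this
  simpa [G, mul_comm] using this

end Lagrange

namespace Polynomial

variable {ι R : Type*} [DecidableEq ι]

/-- For `#s = m + 1` this is the divided difference `∑ i ∈ s, f (x i) / ∏ j ≠ i, (x i - x j)`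
(see `map_dividedDifference_eq_sum`); the complete homogeneous sums show that it lies in `R`. -/
def dividedDifference [CommSemiring R] (f : R[X]) (s : Finset ι) (x : ι → R) (m : ℕ) : R :=
  ∑ n ∈ Ico m (f.natDegree + 1), f.coeff n * s.completeHomogeneous x (n - m)

open Lagrange in
theorem map_dividedDifference_eq_sum {K : Type*} [CommRing R] [Field K] (φ : R →+* K) (f : R[X])
    {s : Finset ι} {x : ι → R} {m : ℕ} (hinj : Set.InjOn (φ ∘ x) s) (hx : ∀ i ∈ s, φ (x i) ≠ 0)
    (hs : #s = m + 1) :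
    φ (f.dividedDifference s x m) = ∑ i ∈ s, nodalWeight s (φ ∘ x) i * φ (f.eval (x i)) := by
  have hIco : (range (f.natDegree + 1)).filter (m ≤ ·) = Ico m (f.natDegree + 1) := by
    ext n
    simp only [mem_filter, mem_range, mem_Ico]
    omega
  simp_rw [eval_eq_sum_range, map_sum, mul_sum, map_mul, map_pow]
  rw [sum_comm]
  simp_rw [mul_left_comm _ (φ (f.coeff _)), ← mul_sum, ← Function.comp_apply (f := φ) (g := x),
    sum_nodalWeight_mul_pow hinj hx hs, mul_ite, mul_zero, ← sum_filter, hIco]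
  simp [dividedDifference, map_completeHomogeneous]

section Order

variable [CommRing R] [LinearOrder R] [IsStrictOrderedRing R]

lemma abs_eval_le_sum_abs_coeff_mul_pow (f : R[X]) {x : R} (hx : 1 ≤ |x|) :
    |f.eval x| ≤ (∑ n ∈ range (f.natDegree + 1), |f.coeff n|) * |x| ^ f.natDegree := by
  rw [eval_eq_sum_range, sum_mul]
  refine (abs_sum_le_sum_abs _ _).trans (sum_le_sum fun n hn => ?_)
  rw [abs_mul, abs_pow]
  exact mul_le_mul_of_nonneg_left (pow_le_pow_right₀ hx (Nat.lt_succ_iff.1 (mem_range.1 hn)))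
    (abs_nonneg _)

variable {f : R[X]} {s : Finset ι} {x : ι → R} {m k : ℕ}

lemma abs_dividedDifference_sub_le {M : R}
    (hf : f.natDegree = m + k) (hx : ∀ i ∈ s, x i ∈ Set.Icc 0 M) (hsM : 1 ≤ #s * M) :
    |f.dividedDifference s x m - f.leadingCoeff * s.completeHomogeneous x k| ≤
      (∑ n ∈ range (f.natDegree + 1), |f.coeff n|) * (#s * M) ^ (k - 1) := by
  rw [dividedDifference, hf, sum_Ico_succ_top (by omega), leadingCoeff, hf,
    Nat.add_sub_cancel_left, add_sub_cancel_right, sum_mul]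
  refine (abs_sum_le_sum_abs _ _).trans ((sum_le_sum fun n hn => ?_).trans
    (sum_le_sum_of_subset_of_nonneg ?_ fun n _ _ => by positivity))
  · rw [abs_mul, abs_of_nonneg (completeHomogeneous_nonneg (fun i hi => (hx i hi).1) _)]
    refine mul_le_mul_of_nonneg_left ((completeHomogeneous_le_card_mul_pow hx _).trans
      (pow_le_pow_right₀ hsM ?_)) (abs_nonneg _)
    have := mem_Ico.1 hn
    omega
  · intro n hn
    simp only [mem_Ico, mem_range] at hn ⊢
    omega

lemma abs_dividedDifference_le {N : R}
    (hf : f.natDegree = m + k) (hk : k ≠ 0) (hx : ∀ i ∈ s, x i ∈ Set.Icc 0 N) (hsN : 1 ≤ #s * N)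
    (hN : (∑ n ∈ range (f.natDegree + 1), |f.coeff n|) * #s ^ (k - 1) ≤ N) :
    |f.dividedDifference s x m| ≤ (|f.leadingCoeff| * #s ^ k + 1) * N ^ k := by
  set B := ∑ n ∈ range (f.natDegree + 1), |f.coeff n|
  set c := f.leadingCoeff * s.completeHomogeneous x k
  have hN0 : 0 ≤ N := (pos_of_mul_pos_right (zero_lt_one.trans_le hsN) (Nat.cast_nonneg _)).le
  calc |f.dividedDifference s x m| = |c + (f.dividedDifference s x m - c)| := by
        rw [add_sub_cancel]
    _ ≤ |c| + |f.dividedDifference s x m - c| := abs_add_le _ _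
    _ ≤ |f.leadingCoeff| * (#s * N) ^ k + B * (#s * N) ^ (k - 1) := by
        rw [abs_mul, abs_of_nonneg (completeHomogeneous_nonneg (fun i hi => (hx i hi).1) k)]
        gcongr
        · exact completeHomogeneous_le_card_mul_pow hx k
        · exact abs_dividedDifference_sub_le hf hx hsN
    _ = |f.leadingCoeff| * #s ^ k * N ^ k + B * #s ^ (k - 1) * N ^ (k - 1) := by ring
    _ ≤ |f.leadingCoeff| * #s ^ k * N ^ k + N * N ^ (k - 1) := by gcongr
    _ = (|f.leadingCoeff| * #s ^ k + 1) * N ^ k := by rw [mul_pow_sub_one hk]; ring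

lemma dividedDifference_ne_zero {M : R}
    (hf : f.natDegree = m + k) (hk : k ≠ 0) (hx : ∀ i ∈ s, x i ∈ Set.Icc 0 M)
    (hM : ∃ i ∈ s, x i = M) (hsM : 1 ≤ #s * M)
    (hlarge : (∑ n ∈ range (f.natDegree + 1), |f.coeff n|) * #s ^ (k - 1) < |f.leadingCoeff| * M) :
    f.dividedDifference s x m ≠ 0 := by
  obtain ⟨i, hi, rfl⟩ := hM
  intro hA
  have hsub := abs_dividedDifference_sub_le hf hx hsM
  have hpos : 0 < x i := (hx i hi).1.lt_of_ne fun h => by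
    rw [← h, mul_zero] at hsM
    exact absurd hsM (by norm_num)
  rw [hA, zero_sub, abs_neg, abs_mul,
    abs_of_nonneg (completeHomogeneous_nonneg (fun i hi => (hx i hi).1) k)] at hsub
  refine lt_irrefl (|f.leadingCoeff| * x i ^ k) ?_
  calc |f.leadingCoeff| * x i ^ k
      ≤ |f.leadingCoeff| * s.completeHomogeneous x k :=
        mul_le_mul_of_nonneg_left (pow_le_completeHomogeneous (fun i hi => (hx i hi).1) hi k)
          (abs_nonneg _)
    _ ≤ (∑ n ∈ range (f.natDegree + 1), |f.coeff n|) * #s ^ (k - 1) * x i ^ (k - 1) := by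
        rwa [mul_pow, ← mul_assoc] at hsub
    _ < |f.leadingCoeff| * x i * x i ^ (k - 1) := mul_lt_mul_of_pos_right hlarge (pow_pos hpos _)
    _ = |f.leadingCoeff| * x i ^ k := by rw [mul_assoc, mul_pow_sub_one hk]

end Order

end Polynomial

lemma Int.isCoprime_prime_pow_sub {p : ℕ} (hp : p.Prime) (k : ℕ) {a b : ℤ} (hab : a ≠ b)
    (h : |a - b| < p) : IsCoprime ((p : ℤ) ^ k) (a - b) :=
  ((Prime.coprime_iff_not_dvd (Nat.prime_iff_prime_int.1 hp)).2 fun hdvd =>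
    sub_ne_zero.2 hab (Int.eq_zero_of_abs_lt_dvd hdvd h)).pow_left

lemma Int.dvd_of_cast_eq_sum_div {ι : Type*} [DecidableEq ι] {s : Finset ι} {a b : ι → ℤ} {q A : ℤ}
    (hb : ∀ i ∈ s, IsCoprime q (b i)) (ha : ∀ i ∈ s, q ∣ a i)
    (hA : (A : ℚ) = ∑ i ∈ s, (a i : ℚ) / b i) : q ∣ A := by
  by_cases hb0 : ∃ i ∈ s, b i = 0
  · obtain ⟨i, hi, hbi⟩ := hb0
    exact (isCoprime_zero_right.1 (hbi ▸ hb i hi)).dvd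
  push Not at hb0
  refine (IsCoprime.prod_right hb).dvd_of_dvd_mul_right ?_
  have hAW : A * ∏ i ∈ s, b i = ∑ i ∈ s, a i * ∏ j ∈ s.erase i, b j := by
    refine Int.cast_injective (α := ℚ) ?_
    push_cast
    rw [hA, sum_mul]
    refine sum_congr rfl fun i hi => ?_
    rw [← mul_prod_erase s _ hi]
    have : (b i : ℚ) ≠ 0 := by exact_mod_cast hb0 i hi
    field_simp
  rw [hAW]
  exact dvd_sum fun i hi => (ha i hi).mul_right _

open Lagrange in
lemma Polynomial.dvd_dividedDifference {ι : Type*} [DecidableEq ι] {f : ℤ[X]} {s : Finset ι}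
    {x : ι → ℤ} {m : ℕ} {q : ℤ} (hs : #s = m + 1) (hinj : Set.InjOn x s) (hx : ∀ i ∈ s, x i ≠ 0)
    (hq : ∀ i ∈ s, ∀ j ∈ s, i ≠ j → IsCoprime q (x i - x j))
    (hdvd : ∀ i ∈ s, q ∣ f.eval (x i)) : q ∣ f.dividedDifference s x m := by
  have hA := map_dividedDifference_eq_sum (Int.castRingHom ℚ) f (Int.cast_injective.comp_injOn hinj)
    (by simpa using hx) hs
  refine Int.dvd_of_cast_eq_sum_div (b := fun i => ∏ j ∈ s.erase i, (x i - x j))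
    (fun i hi => IsCoprime.prod_right fun j hj =>
      hq i hi j (mem_of_mem_erase hj) (ne_of_mem_erase hj).symm) hdvd ?_
  simpa [nodalWeight, div_eq_inv_mul, prod_inv_distrib] using hA

namespace Polynomial

variable {f : ℤ[X]} {k N p : ℕ} {s : Finset ℕ}

lemma dividedDifference_eq_zero_of_prime_pow_dvd_eval (hk : k ≠ 0) (hkd : k ≤ f.natDegree)
    (hs : #s = f.natDegree - k + 1) (hsN : s ⊆ Icc 1 N)
    (hN : (∑ n ∈ range (f.natDegree + 1), |f.coeff n|) * f.natDegree ^ (k - 1) ≤ N)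
    (hp : p.Prime) (hpN : (f.natDegree * |f.leadingCoeff| + 1) * N < p)
    (hdvd : ∀ n ∈ s, (p : ℤ) ^ k ∣ f.eval (n : ℤ)) :
    f.dividedDifference s ((↑) : ℕ → ℤ) (f.natDegree - k) = 0 := by
  set d := f.natDegree
  have hmem : ∀ n ∈ s, 1 ≤ n ∧ n ≤ N := fun n hn => mem_Icc.1 (hsN hn)
  have hsd : (#s : ℤ) ≤ d := by omega
  have hNp : (N : ℤ) < p := by
    have : 0 ≤ (d : ℤ) * |f.leadingCoeff| * N := by positivity
    linarith
  obtain ⟨n₀, hn₀⟩ := card_pos.1 (show 0 < #s by omega)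
  have hsN1 : (1 : ℤ) ≤ #s * N := one_le_mul_of_one_le_of_one_le
    (by exact_mod_cast card_pos.2 ⟨n₀, hn₀⟩)
    (by exact_mod_cast (hmem n₀ hn₀).1.trans (hmem n₀ hn₀).2)
  have hBs : (∑ n ∈ range (d + 1), |f.coeff n|) * #s ^ (k - 1) ≤ N :=
    (mul_le_mul_of_nonneg_left (pow_le_pow_left₀ (Nat.cast_nonneg _) hsd _)
      (sum_nonneg fun _ _ => abs_nonneg _)).trans hN
  have hlcd : |f.leadingCoeff| * #s ^ k + 1 ≤ (d * |f.leadingCoeff| + 1) ^ k :=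
    calc |f.leadingCoeff| * #s ^ k + 1 ≤ (d * |f.leadingCoeff|) ^ k + 1 ^ k := by
          rw [mul_pow, mul_comm, one_pow]
          gcongr
          exact le_self_pow₀ (Int.one_le_abs (leadingCoeff_ne_zero.2
            (ne_zero_of_natDegree_gt (n := 0) (by omega)))) hk
      _ ≤ _ := pow_add_pow_le (by positivity) zero_le_one hk
  have hcop : ∀ i ∈ s, ∀ j ∈ s, i ≠ j → IsCoprime ((p : ℤ) ^ k) ((i : ℤ) - j) := by
    intro i hi j hj hij
    have := hmem i hi
    have := hmem j hj
    exact Int.isCoprime_prime_pow_sub hp k (by exact_mod_cast hij) (abs_lt.2 ⟨by omega, by omega⟩)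
  refine Int.eq_zero_of_abs_lt_dvd (dvd_dividedDifference hs Nat.cast_injective.injOn
    (fun n hn => by have := (hmem n hn).1; positivity) hcop hdvd) ?_
  calc |f.dividedDifference s ((↑) : ℕ → ℤ) (d - k)|
      ≤ (|f.leadingCoeff| * #s ^ k + 1) * N ^ k := abs_dividedDifference_le (by omega) hk
        (fun i hi => ⟨Nat.cast_nonneg _, by exact_mod_cast (hmem i hi).2⟩) hsN1 hBs
    _ ≤ ((d * |f.leadingCoeff| + 1) * N) ^ k := by
        rw [mul_pow]
        exact mul_le_mul_of_nonneg_right hlcd (by positivity)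
    _ < (p : ℤ) ^ k := pow_lt_pow_left₀ hpN (by positivity) hk

theorem forall_mem_le_of_prime_pow_dvd_eval (hk : k ≠ 0) (hkd : k ≤ f.natDegree)
    (hs : #s = f.natDegree - k + 1) (hsN : s ⊆ Icc 1 N)
    (hN : (∑ n ∈ range (f.natDegree + 1), |f.coeff n|) * f.natDegree ^ (k - 1) ≤ N)
    (hp : p.Prime) (hpN : (f.natDegree * |f.leadingCoeff| + 1) * N < p)
    (hdvd : ∀ n ∈ s, (p : ℤ) ^ k ∣ f.eval (n : ℤ)) :
    ∀ n ∈ s, (n : ℤ) ≤ (∑ n ∈ range (f.natDegree + 1), |f.coeff n|) * f.natDegree ^ (k - 1) := by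
  set B := ∑ n ∈ range (f.natDegree + 1), |f.coeff n|
  intro n hn
  have hs0 : s.Nonempty := ⟨n, hn⟩
  set M := s.max' hs0
  have hM1 : (1 : ℤ) ≤ M := by exact_mod_cast (mem_Icc.1 (hsN (max'_mem s hs0))).1
  have hxM : ∀ i ∈ s, (i : ℤ) ∈ Set.Icc 0 (M : ℤ) :=
    fun i hi => ⟨Nat.cast_nonneg _, by exact_mod_cast le_max' s i hi⟩
  have hsM : (1 : ℤ) ≤ #s * M :=
    one_le_mul_of_one_le_of_one_le (by exact_mod_cast card_pos.2 hs0) hM1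
  have hlM : |f.leadingCoeff| * M ≤ B * #s ^ (k - 1) :=
    not_lt.1 fun h => dividedDifference_ne_zero (Nat.sub_add_cancel hkd).symm hk hxM
      ⟨M, max'_mem s hs0, rfl⟩ hsM h
      (dividedDifference_eq_zero_of_prime_pow_dvd_eval hk hkd hs hsN hN hp hpN hdvd)
  calc (n : ℤ) ≤ M := by exact_mod_cast le_max' s n hn
    _ ≤ |f.leadingCoeff| * M :=
        le_mul_of_one_le_left (by positivity)
          (Int.one_le_abs (leadingCoeff_ne_zero.2 (ne_zero_of_natDegree_gt (n := 0) (by omega))))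
    _ ≤ B * #s ^ (k - 1) := hlM
    _ ≤ B * f.natDegree ^ (k - 1) := mul_le_mul_of_nonneg_left
        (pow_le_pow_left₀ (Nat.cast_nonneg _) (by omega) _) (sum_nonneg fun _ _ => abs_nonneg _)

end Polynomial

theorem stmt_5_general (f : Polynomial ℤ) (d : ℕ) (hd : f.natDegree = d)
    (hroots : ∀ n : ℤ, f.eval n ≠ 0) (D : ℤ) (hD : D = d * |f.leadingCoeff| + 1) :
    ∃ N₀ : ℕ, ∀ N : ℕ, N₀ ≤ N → ∀ p : ℕ, p.Prime → D * N < p →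
      ∀ k : ℕ, 1 ≤ k → k ≤ d - 1 →
        ((Finset.Icc 1 N).filter fun n : ℕ => (p : ℤ) ^ k ∣ f.eval (n : ℤ)).card
          ≤ d - k := by
  subst hd hD
  set B := ∑ n ∈ range (f.natDegree + 1), |f.coeff n|
  set T := B * f.natDegree ^ f.natDegree
  have hB : 0 ≤ B := sum_nonneg fun _ _ => abs_nonneg _
  have hT : 0 ≤ T := mul_nonneg hB (by positivity)
  refine ⟨(B * T ^ f.natDegree + T).toNat + 1, fun N hN p hp hpN k hk hkd => ?_⟩
  have hTN : B * T ^ f.natDegree + T < N := by omega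
  have hBTd : 0 ≤ B * T ^ f.natDegree := mul_nonneg hB (pow_nonneg hT _)
  by_contra! hcard
  obtain ⟨s, hsub, hs⟩ := exists_subset_card_eq (show f.natDegree - k + 1 ≤ _ from hcard)
  have hdvd : ∀ n ∈ s, (p : ℤ) ^ k ∣ f.eval (n : ℤ) := fun n hn => (mem_filter.1 (hsub hn)).2
  obtain ⟨n, hn⟩ := card_pos.1 (show 0 < #s by omega)
  have hn1 : (1 : ℤ) ≤ n := by exact_mod_cast (mem_Icc.1 (mem_of_mem_filter _ (hsub hn))).1
  have hBk : B * f.natDegree ^ (k - 1) ≤ T :=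
    mul_le_mul_of_nonneg_left (pow_le_pow_right₀ (by norm_cast; omega) (by omega)) hB
  have hnT : (n : ℤ) ≤ T := (forall_mem_le_of_prime_pow_dvd_eval (by omega) (by omega) hs
    (hsub.trans (filter_subset _ _)) (by linarith) hp hpN hdvd n hn).trans hBk
  have hpf : (p : ℤ) ≤ |f.eval (n : ℤ)| := Int.le_of_dvd (abs_pos.2 (hroots n))
    ((dvd_abs _ _).2 ((dvd_pow_self _ (by omega)).trans (hdvd n hn)))
  have hfn : |f.eval (n : ℤ)| ≤ B * T ^ f.natDegree := by
    have := abs_eval_le_sum_abs_coeff_mul_pow f (x := (n : ℤ)) (by rwa [abs_of_pos (by omega)])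
    rw [abs_of_pos (by omega : (0 : ℤ) < n)] at this
    exact this.trans (mul_le_mul_of_nonneg_left (pow_le_pow_left₀ (by omega) hnT _) hB)
  have : 0 ≤ (f.natDegree : ℤ) * |f.leadingCoeff| * N := by positivity
  linarith

/-- Let `f ∈ ℤ[x]` of degree `d ≥ 2` without integer roots and
`D = d·|f_d| + 1`. For all sufficiently large `N`, every prime `p > D·N` and
every `1 ≤ k ≤ d−1`, at most `d − k` of the values `f(1), …, f(N)` are
divisible by `p^k`. -/
theorem stmt_5 (f : Polynomial ℤ) (d : ℕ) (hd : f.natDegree = d) (hd2 : 2 ≤ d)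
    (hroots : ∀ n : ℤ, f.eval n ≠ 0) (D : ℤ) (hD : D = d * |f.leadingCoeff| + 1) :
    ∃ N₀ : ℕ, ∀ N : ℕ, N₀ ≤ N → ∀ p : ℕ, p.Prime → D * N < p →
      ∀ k : ℕ, 1 ≤ k → k ≤ d - 1 →
        ((Finset.Icc 1 N).filter fun n : ℕ => (p : ℤ) ^ k ∣ f.eval (n : ℤ)).card
          ≤ d - k :=
  stmt_5_general f d hd hroots D hD
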